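/- Let ξ > 0, c > 0, and let α : [1,∞) → ℝ be measurable, integrable on compact subintervals, with α(t) → 0 as t → ∞. Define Q(u) = (1−u)^{−ξ} · c · exp(∫_1^{1/(1−u)} α(t)/t dt) for u ∈ (0,1). Then for every sequence τ_n ∈ (0,1) with τ_n → 1, (1−τ_n)^{−1} · ∫_{τ_n}^1 (Q(τ_n)/Q(u))² du → 1/(1+2ξ) as n → ∞. -/

import Mathlib

/-! Substituting `u = 1 - y s` with `y = 1 - τ` turns the quantity into
`∫₀¹ (U(1/y) / U(1/(y s)))² ds`, where `U(x) = Q(1 - 1/x)`. In Karamata form the ratio is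
`s^ξ · exp(-∫_{1/y}^{1/(y s)} α(t)/t dt)`, and once `|α| ≤ ε` beyond `1/y` the exponential factor
lies between `s^ε` and `s^(-ε)`. So for large `n` the quantity lies between `1/(2(ξ+ε)+1)` and
`1/(2(ξ-ε)+1)`, and letting `ε → 0` gives the limit. -/

open MeasureTheory Real Filter Set Topology Interval

theorem IntervalIntegrable.div_id {f : ℝ → ℝ} {μ : Measure ℝ} {a b : ℝ}
    (hf : IntervalIntegrable f μ a b) (h0 : (0 : ℝ) ∉ [[a, b]]) :
    IntervalIntegrable (fun t => f t / t) μ a b := by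
  simpa only [div_eq_mul_inv] using
    hf.mul_continuousOn (continuousOn_inv₀.mono fun t ht (h : t = 0) => h0 (h ▸ ht))

theorem continuousOn_primitive_Ici {E : Type*} [NormedAddCommGroup E] [NormedSpace ℝ E]
    {f : ℝ → E} {a : ℝ} (hf : ∀ b, a ≤ b → IntervalIntegrable f volume a b) :
    ContinuousOn (fun x => ∫ t in a..x, f t) (Ici a) := fun x hx => by
  have hax : a ≤ x + 1 := by linarith [mem_Ici.1 hx]
  have hcont := intervalIntegral.continuousOn_primitive_interval' (hf _ hax) left_mem_uIcc
  rw [uIcc_of_le hax] at hcont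
  refine (hcont x ⟨hx, by linarith⟩).mono_of_mem_nhdsWithin ?_
  rw [← Ici_inter_Iic]
  exact inter_mem_nhdsWithin _ (Iic_mem_nhds (by linarith))

theorem abs_integral_div_id_le_mul_log {f : ℝ → ℝ} {a b ε : ℝ} (ha : 0 < a) (hab : a ≤ b)
    (hf : IntervalIntegrable f volume a b) (hfε : ∀ t ∈ Icc a b, |f t| ≤ ε) :
    |∫ t in a..b, f t / t| ≤ ε * log (b / a) := by
  have h0 : (0 : ℝ) ∉ [[a, b]] := by rw [uIcc_of_le hab]; exact fun h => ha.not_ge h.1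
  calc |∫ t in a..b, f t / t| ≤ ∫ t in a..b, |f t / t| :=
        intervalIntegral.abs_integral_le_integral_abs hab
    _ ≤ ∫ t in a..b, ε * t⁻¹ := by
        refine intervalIntegral.integral_mono_on hab (hf.div_id h0).abs
          ((intervalIntegral.intervalIntegrable_inv (fun t ht h => h0 (h ▸ ht))
            continuousOn_id).const_mul ε) fun t ht => ?_
        rw [abs_div, abs_of_pos (ha.trans_le ht.1), div_eq_mul_inv]
        exact mul_le_mul_of_nonneg_right (hfε t ht) (inv_nonneg.2 (ha.trans_le ht.1).le)
    _ = ε * log (b / a) := by rw [intervalIntegral.integral_const_mul, integral_inv h0]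

theorem exp_mem_Icc_rpow_of_abs_le {r J ε : ℝ} (hr : 0 < r) (hJ : |J| ≤ ε * log r⁻¹) :
    exp J ∈ Icc (r ^ ε) (r ^ (-ε)) := by
  rw [log_inv] at hJ
  rw [rpow_def_of_pos hr, rpow_def_of_pos hr]
  constructor <;> apply exp_le_exp.2 <;> linarith [abs_le.1 hJ]

theorem tendsto_of_forall_eventually_mem_Icc {ι κ β : Type*} [TopologicalSpace β] [LinearOrder β]
    [OrderTopology β] {l : Filter ι} {f : Filter κ} [f.NeBot] {x : ι → β} {g h : κ → β} {L : β}
    (hg : Tendsto g f (𝓝 L)) (hh : Tendsto h f (𝓝 L))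
    (H : ∀ᶠ ε in f, ∀ᶠ i in l, x i ∈ Icc (g ε) (h ε)) : Tendsto x l (𝓝 L) := by
  refine tendsto_order.2 ⟨fun b hb => ?_, fun b hb => ?_⟩
  · obtain ⟨ε, hε, hbε⟩ := (H.and (hg.eventually (lt_mem_nhds hb))).exists
    filter_upwards [hε] with i hi using hbε.trans_le hi.1
  · obtain ⟨ε, hε, hbε⟩ := (H.and (hh.eventually (gt_mem_nhds hb))).exists
    filter_upwards [hε] with i hi using hi.2.trans_lt hbε

theorem integral_rpow_zero_one {p : ℝ} (hp : -1 < p) : ∫ s in (0:ℝ)..1, s ^ p = 1 / (p + 1) := by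
  rw [integral_rpow (Or.inl hp), one_rpow, zero_rpow (by linarith), sub_zero]

/-- `U(x) = Q(1 - 1/x)`, the tail quantile function of `Q`. -/
noncomputable def karamataTail (ξ c : ℝ) (α : ℝ → ℝ) (x : ℝ) : ℝ :=
  x ^ ξ * c * exp (∫ t in (1:ℝ)..x, α t / t)

section Karamata

variable {ξ c : ℝ} {α : ℝ → ℝ}

theorem karamataTail_inv {x : ℝ} (hx : 0 < x) :
    karamataTail ξ c α x⁻¹ = x ^ (-ξ) * c * exp (∫ t in (1:ℝ)..(1 / x), α t / t) := by
  rw [karamataTail, rpow_neg hx.le, inv_rpow hx.le, one_div]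

theorem karamataTail_ne_zero (hc : c ≠ 0) {x : ℝ} (hx : 0 < x) : karamataTail ξ c α x ≠ 0 := by
  unfold karamataTail
  have := rpow_pos_of_pos hx ξ
  positivity

theorem karamataTail_div (hc : c ≠ 0) {a b : ℝ} (ha : 0 < a) (hb : 0 < b)
    (hαa : IntervalIntegrable α volume 1 a) (hαb : IntervalIntegrable α volume 1 b) :
    karamataTail ξ c α a / karamataTail ξ c α b = (a / b) ^ ξ * exp (-∫ t in a..b, α t / t) := by
  have hpos : ∀ x : ℝ, 0 < x → (0 : ℝ) ∉ [[1, x]] := fun x hx h =>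
    (lt_min one_pos hx).not_ge h.1
  rw [← intervalIntegral.integral_interval_sub_left ((hαb.div_id (hpos b hb)))
    (hαa.div_id (hpos a ha)), neg_sub, exp_sub, div_rpow ha.le hb.le]
  unfold karamataTail
  have := rpow_pos_of_pos hb ξ
  field_simp

theorem karamataTail_div_mem_Icc (hc : c ≠ 0) {a b ε : ℝ} (ha : 0 < a) (hab : a ≤ b)
    (hαa : IntervalIntegrable α volume 1 a) (hαb : IntervalIntegrable α volume 1 b)
    (hαε : ∀ t ∈ Icc a b, |α t| ≤ ε) :
    karamataTail ξ c α a / karamataTail ξ c α b ∈ Icc ((a / b) ^ (ξ + ε)) ((a / b) ^ (ξ - ε)) := by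
  have hb := ha.trans_le hab
  have hr : 0 < a / b := div_pos ha hb
  have hJ := abs_integral_div_id_le_mul_log ha hab ((hαa.symm.trans hαb)) hαε
  rw [← abs_neg, ← inv_div] at hJ
  obtain ⟨hlow, hupp⟩ := exp_mem_Icc_rpow_of_abs_le hr hJ
  rw [karamataTail_div hc ha hb hαa hαb, rpow_add hr, sub_eq_add_neg, rpow_add hr]
  have := rpow_nonneg hr.le ξ
  exact ⟨mul_le_mul_of_nonneg_left hlow this, mul_le_mul_of_nonneg_left hupp this⟩

theorem continuousOn_karamataTail (hint : ∀ b, 1 ≤ b → IntervalIntegrable α volume 1 b) :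
    ContinuousOn (karamataTail ξ c α) (Ici 1) := by
  have hL := continuousOn_primitive_Ici fun b hb => (hint b hb).div_id
    fun h => (lt_of_lt_of_le one_pos (le_min le_rfl hb)).not_ge h.1
  refine ((continuousOn_id.rpow_const fun x hx => Or.inl ?_).mul continuousOn_const).mul hL.rexp
  exact (lt_of_lt_of_le one_pos hx).ne'

theorem sq_karamataTail_div_mem_Icc (hc : c ≠ 0)
    (hint : ∀ b, 1 ≤ b → IntervalIntegrable α volume 1 b) {y ε s : ℝ} (hy0 : 0 < y) (hy1 : y ≤ 1)
    (hαε : ∀ t, y⁻¹ ≤ t → |α t| ≤ ε) (hs : s ∈ Ioc (0:ℝ) 1) :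
    (karamataTail ξ c α y⁻¹ / karamataTail ξ c α (y * s)⁻¹) ^ 2 ∈
      Icc (s ^ (2 * (ξ + ε))) (s ^ (2 * (ξ - ε))) := by
  have h1y : 1 ≤ y⁻¹ := one_le_inv₀ hy0 |>.2 hy1
  have hys : y⁻¹ ≤ (y * s)⁻¹ :=
    inv_anti₀ (mul_pos hy0 hs.1) (mul_le_of_le_one_right hy0.le hs.2)
  obtain ⟨hlow, hupp⟩ := karamataTail_div_mem_Icc (ξ := ξ) hc (inv_pos.2 hy0) hys
    (hint _ h1y) (hint _ (h1y.trans hys)) fun t ht => hαε t ht.1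
  have hratio : y⁻¹ / (y * s)⁻¹ = s := by field_simp [hs.1.ne']
  rw [hratio] at hlow hupp
  have hsq : ∀ q : ℝ, s ^ (2 * q) = (s ^ q) ^ 2 := fun q => by
    rw [mul_comm, rpow_mul hs.1.le, rpow_two]
  rw [hsq, hsq]
  exact ⟨pow_le_pow_left₀ (rpow_nonneg hs.1.le _) hlow 2,
    pow_le_pow_left₀ ((rpow_nonneg hs.1.le _).trans hlow) hupp 2⟩

theorem integral_sq_karamataTail_div_mem_Icc (hc : c ≠ 0)
    (hint : ∀ b, 1 ≤ b → IntervalIntegrable α volume 1 b) {y ε : ℝ} (hy0 : 0 < y) (hy1 : y ≤ 1)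
    (hαε : ∀ t, y⁻¹ ≤ t → |α t| ≤ ε) (hξε : -1 < 2 * (ξ - ε)) :
    ∫ s in (0:ℝ)..1, (karamataTail ξ c α y⁻¹ / karamataTail ξ c α (y * s)⁻¹) ^ 2 ∈
      Icc (1 / (2 * (ξ + ε) + 1)) (1 / (2 * (ξ - ε) + 1)) := by
  set F := fun s : ℝ => (karamataTail ξ c α y⁻¹ / karamataTail ξ c α (y * s)⁻¹) ^ 2
  have hε : 0 ≤ ε := (abs_nonneg _).trans (hαε _ le_rfl)
  have h1y : 1 ≤ y⁻¹ := one_le_inv₀ hy0 |>.2 hy1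
  have hys : ∀ s ∈ Ioc (0:ℝ) 1, y⁻¹ ≤ (y * s)⁻¹ := fun s hs =>
    inv_anti₀ (mul_pos hy0 hs.1) (mul_le_of_le_one_right hy0.le hs.2)
  have hbound : ∀ s ∈ Ioc (0:ℝ) 1, F s ∈ Icc (s ^ (2 * (ξ + ε))) (s ^ (2 * (ξ - ε))) :=
    fun s hs => sq_karamataTail_div_mem_Icc hc hint hy0 hy1 hαε hs
  have hcont : ContinuousOn F (Ioc 0 1) := by
    refine (continuousOn_const.div ((continuousOn_karamataTail hint).comp
      ((continuousOn_const.mul continuousOn_id).inv₀ fun s hs => (mul_pos hy0 hs.1).ne')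
      fun s hs => ?_) fun s hs => karamataTail_ne_zero hc (inv_pos.2 (mul_pos hy0 hs.1))).pow 2
    exact h1y.trans (hys s hs)
  have hF : IntervalIntegrable F volume 0 1 := by
    refine (intervalIntegral.intervalIntegrable_rpow' hξε).mono_fun' ?_ ?_ <;>
      rw [uIoc_of_le zero_le_one]
    · exact hcont.aestronglyMeasurable measurableSet_Ioc
    · refine (ae_restrict_iff' measurableSet_Ioc).2 (ae_of_all _ fun s hs => ?_)
      show ‖F s‖ ≤ s ^ (2 * (ξ - ε))
      rw [norm_of_nonneg (sq_nonneg _)]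
      exact (hbound s hs).2
  rw [← integral_rpow_zero_one hξε, ← integral_rpow_zero_one (by linarith : -1 < 2 * (ξ + ε))]
  exact ⟨intervalIntegral.integral_mono_on_of_le_Ioo zero_le_one
      (intervalIntegral.intervalIntegrable_rpow' (by linarith)) hF
      fun s hs => (hbound s (Ioo_subset_Ioc_self hs)).1,
    intervalIntegral.integral_mono_on_of_le_Ioo zero_le_one hF
      (intervalIntegral.intervalIntegrable_rpow' hξε)
      fun s hs => (hbound s (Ioo_subset_Ioc_self hs)).2⟩

theorem inv_mul_integral_sq_div_eq_karamataTail {Q : ℝ → ℝ}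
    (hQ : ∀ x ∈ Ioo (0:ℝ) 1, Q (1 - x) = karamataTail ξ c α x⁻¹) {y : ℝ} (hy : y ∈ Ioo (0:ℝ) 1) :
    y⁻¹ * ∫ u in (1 - y)..1, (Q (1 - y) / Q u) ^ 2 =
      ∫ s in (0:ℝ)..1, (karamataTail ξ c α y⁻¹ / karamataTail ξ c α (y * s)⁻¹) ^ 2 := by
  have hsubst := intervalIntegral.integral_comp_sub_mul (fun u => (Q (1 - y) / Q u) ^ 2)
    (a := 0) (b := 1) hy.1.ne' 1
  simp only [mul_one, mul_zero, sub_zero, smul_eq_mul] at hsubst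
  rw [← hsubst]
  refine intervalIntegral.integral_congr_ae (ae_of_all _ fun s hs => ?_)
  rw [uIoc_of_le zero_le_one] at hs
  have hys : y * s ∈ Ioo (0:ℝ) 1 :=
    ⟨mul_pos hy.1 hs.1, (mul_le_of_le_one_right hy.1.le hs.2).trans_lt hy.2⟩
  rw [hQ _ hys, hQ _ hy]

end Karamata

theorem g_tilde_population_limit_general
    (ξ c : ℝ) (hξ : 0 < ξ) (hc : 0 < c)
    (α : ℝ → ℝ)
    (hint : ∀ a b : ℝ, 1 ≤ a → IntervalIntegrable α volume a b)
    (hα : Filter.Tendsto α Filter.atTop (nhds 0))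
    (Q : ℝ → ℝ)
    (hQ : ∀ u ∈ Set.Ioo (0:ℝ) 1,
      Q u = (1 - u) ^ (-ξ) * c *
        Real.exp (∫ t in (1:ℝ)..(1 / (1 - u)), α t / t))
    (τ : ℕ → ℝ) (hτ : ∀ n, τ n ∈ Set.Ioo (0:ℝ) 1)
    (hτ1 : Filter.Tendsto τ Filter.atTop (nhds 1)) :
    Filter.Tendsto
      (fun n => (1 - τ n)⁻¹ * ∫ u in (τ n)..1, (Q (τ n) / Q u) ^ 2)
      Filter.atTop (nhds (1 / (1 + 2 * ξ))) := by
  set U := karamataTail ξ c α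
  have hy : ∀ n, 1 - τ n ∈ Ioo (0:ℝ) 1 := fun n => ⟨by linarith [(hτ n).2], by linarith [(hτ n).1]⟩
  have hQU : ∀ x ∈ Ioo (0:ℝ) 1, Q (1 - x) = U x⁻¹ := fun x hx => by
    rw [hQ _ ⟨by linarith [hx.2], by linarith [hx.1]⟩, sub_sub_cancel]
    exact (karamataTail_inv hx.1).symm
  have hrescale : ∀ n, (1 - τ n)⁻¹ * ∫ u in (τ n)..1, (Q (τ n) / Q u) ^ 2 =
      ∫ s in (0:ℝ)..1, (U (1 - τ n)⁻¹ / U ((1 - τ n) * s)⁻¹) ^ 2 := fun n => by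
    simpa only [sub_sub_cancel] using inv_mul_integral_sq_div_eq_karamataTail hQU (hy n)
  have hyinv : Tendsto (fun n => (1 - τ n)⁻¹) atTop atTop :=
    tendsto_inv_nhdsGT_zero.comp (tendsto_nhdsWithin_iff.2 ⟨by
      simpa using (tendsto_const_nhds (x := (1:ℝ))).sub hτ1, .of_forall fun n => (hy n).1⟩)
  have hbounds : ∀ σ : ℝ,
      Tendsto (fun ε => 1 / (2 * (ξ + σ * ε) + 1)) (𝓝[>] 0) (𝓝 (1 / (1 + 2 * ξ))) := fun σ => by
    refine tendsto_nhdsWithin_of_tendsto_nhds ?_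
    have hcont : ContinuousAt (fun ε : ℝ => 1 / (2 * (ξ + σ * ε) + 1)) 0 :=
      continuousAt_const.div (by fun_prop) (by simp only [mul_zero, add_zero]; positivity)
    simpa [add_comm] using hcont.tendsto
  refine (tendsto_congr hrescale).2
    (tendsto_of_forall_eventually_mem_Icc (hbounds 1) (hbounds (-1)) ?_)
  simp only [one_mul, neg_one_mul, ← sub_eq_add_neg]
  filter_upwards [Ioo_mem_nhdsGT hξ] with ε hε
  obtain ⟨T, hT⟩ := eventually_atTop.1 (hα.eventually (eventually_abs_sub_lt 0 hε.1))
  filter_upwards [hyinv.eventually_ge_atTop T] with n hn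
  exact integral_sq_karamataTail_div_mem_Icc hc.ne' (fun b _ => hint 1 b le_rfl) (hy n).1
    (hy n).2.le (fun t ht => by simpa using (hT t (hn.trans ht)).le) (by linarith [hε.2])

/-- Population version of the squared-ratio statistic `g̃` at the approximate
Grimshaw solution: `(1−τ_n)⁻¹ ∫_{τ_n}^1 (Q(τ_n)/Q(u))² du → 1/(1+2ξ)` for a
heavy-tailed Karamata quantile function with extreme value index `ξ > 0`. -/
theorem g_tilde_population_limit
    (ξ c : ℝ) (hξ : 0 < ξ) (hc : 0 < c)
    (α : ℝ → ℝ) (hmeas : Measurable α)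
    (hint : ∀ a b : ℝ, 1 ≤ a → IntervalIntegrable α volume a b)
    (hα : Filter.Tendsto α Filter.atTop (nhds 0))
    (Q : ℝ → ℝ)
    (hQ : ∀ u ∈ Set.Ioo (0:ℝ) 1,
      Q u = (1 - u) ^ (-ξ) * c *
        Real.exp (∫ t in (1:ℝ)..(1 / (1 - u)), α t / t))
    (τ : ℕ → ℝ) (hτ : ∀ n, τ n ∈ Set.Ioo (0:ℝ) 1)
    (hτ1 : Filter.Tendsto τ Filter.atTop (nhds 1)) :
    Filter.Tendsto
      (fun n => (1 - τ n)⁻¹ * ∫ u in (τ n)..1, (Q (τ n) / Q u) ^ 2)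
      Filter.atTop (nhds (1 / (1 + 2 * ξ))) :=
  g_tilde_population_limit_general ξ c hξ hc α hint hα Q hQ τ hτ hτ1
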